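/- For a continuous scalar function a : R → R satisfying a(t) ≤ M on alternating intervals of length at most L and a(t) ≤ -c on intervals of length at least k, with c k > M L, every solution of ė = a(t) e decays exponentially: there exist K, λ > 0 with |e(t)| ≤ K e^{-λ(t-t0)} |e(t0)| for all t ≥ t0. -/

import Mathlib

/-!
The solution is `e t = e t₀ · exp (∫_{t₀}^t a)`, so it suffices to show
`∫_{t₀}^t a ≤ -λ (t - t₀) + 2 (M + λ) L` for a rate `λ > 0` balancing one period,
`(c - λ) k = (M + λ) L`. With this choice `g t = ∫_0^t a + λ t` does not increase over a full
period `[p (2i), p (2i+2)]` and increases by at most `(M + λ) L` inside one, since it decreases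
on the good part and the bad part is shorter than `L`. An arbitrary interval `[t₀, t]` is covered
by the tail of one period, a run of full periods and the head of another.
-/

open Set Filter Real

theorem sub_le_mul_sub_of_hasDerivAt {f f' : ℝ → ℝ} (hf : ∀ t, HasDerivAt f (f' t) t)
    {C u v : ℝ} (huv : u ≤ v) (hC : ∀ t ∈ Ioo u v, f' t ≤ C) : f v - f u ≤ C * (v - u) :=
  (convex_Icc u v).image_sub_le_mul_sub_of_deriv_le
    (fun t _ => (hf t).continuousAt.continuousWithinAt)
    (fun t _ => (hf t).differentiableAt.differentiableWithinAt)
    (fun t ht => by rw [interior_Icc] at ht; rw [(hf t).deriv]; exact hC t ht)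
    u (left_mem_Icc.2 huv) v (right_mem_Icc.2 huv) huv

theorem eq_mul_exp_sub_of_hasDerivAt {a G e : ℝ → ℝ} (hG : ∀ t, HasDerivAt G (a t) t)
    (he : ∀ t, HasDerivAt e (a t * e t) t) (t₀ t : ℝ) : e t = e t₀ * exp (G t - G t₀) := by
  have hderiv : ∀ s, HasDerivAt (fun s => e s * exp (-G s)) 0 s := fun s =>
    ((he s).fun_mul (hG s).fun_neg.exp).congr_deriv (by ring)
  have hconst := is_const_of_deriv_eq_zero (fun s => (hderiv s).differentiableAt)
    (fun s => (hderiv s).deriv) t t₀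
  calc e t = e t * exp (-G t) * exp (G t) := by rw [mul_assoc, ← exp_add, neg_add_cancel,
        exp_zero, mul_one]
    _ = e t₀ * exp (G t - G t₀) := by rw [hconst, mul_assoc, ← exp_add, neg_add_eq_sub]

theorem Int.exists_mem_Ico_of_tendsto {α : Type*} [LinearOrder α] [NoMaxOrder α] {q : ℤ → α}
    (htop : Tendsto q atTop atTop) (hbot : Tendsto q atBot atBot) (x : α) :
    ∃ i, x ∈ Ico (q i) (q (i + 1)) := by
  obtain ⟨N, hN⟩ := eventually_atTop.1 (htop.eventually_gt_atTop x)
  obtain ⟨N', hN'⟩ := eventually_atBot.1 (hbot.eventually_le_atBot x)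
  obtain ⟨i, hi, hmax⟩ := Int.exists_greatest_of_bdd (P := fun i => q i ≤ x)
    ⟨N, fun i hi => not_lt.1 fun h => (hN i h.le).not_ge hi⟩ ⟨N', hN' N' le_rfl⟩
  exact ⟨i, hi, not_le.1 fun h => (hmax _ h).not_gt (lt_add_one i)⟩

theorem le_add_two_mul_of_le_on_cells {q : ℤ → ℝ} {g : ℝ → ℝ} {D : ℝ} (hq : Monotone q)
    (htop : Tendsto q atTop atTop) (hbot : Tendsto q atBot atBot)
    (hstep : ∀ i, g (q (i + 1)) ≤ g (q i))
    (hcell : ∀ i u v, q i ≤ u → u ≤ v → v ≤ q (i + 1) → g v ≤ g u + D)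
    {u v : ℝ} (huv : u ≤ v) : g v ≤ g u + 2 * D := by
  obtain ⟨i, hiu, hui⟩ := Int.exists_mem_Ico_of_tendsto htop hbot u
  obtain ⟨j, hjv, hvj⟩ := Int.exists_mem_Ico_of_tendsto htop hbot v
  have hD : 0 ≤ D := by simpa using hcell i u u hiu le_rfl hui.le
  rcases lt_or_ge i j with hij | hji
  · have hhead := hcell i u (q (i + 1)) hiu hui.le le_rfl
    have hrun : g (q j) ≤ g (q (i + 1)) := antitone_int_of_succ_le (f := g ∘ q) hstep hij
    have htail := hcell j (q j) v le_rfl hjv hvj.le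
    linarith
  · have := hcell i u v hiu huv (hvj.le.trans (hq (by omega)))
    linarith

theorem exists_rate_of_mul_lt_mul {M L c k : ℝ} (hM : 0 < M) (hL : 0 < L) (hc : 0 < c)
    (hk : 0 < k) (hrate : M * L < c * k) :
    ∃ lam, 0 < lam ∧ lam ≤ c ∧ 0 ≤ M + lam ∧ (M + lam) * L ≤ (c - lam) * k := by
  have hkL : 0 < k + L := by positivity
  -- the rate solving `(c - λ) k = (M + λ) L`
  refine ⟨(c * k - M * L) / (k + L), div_pos (by linarith) hkL, ?_, ?_, ?_⟩
  · rw [div_le_iff₀ hkL]; nlinarith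
  · rw [← neg_le_iff_add_nonneg', le_div_iff₀ hkL]; nlinarith
  · exact le_of_eq (by field_simp; ring)

section Alternating

variable {a g : ℝ → ℝ} {p : ℤ → ℝ} {M L c k lam : ℝ}

theorem sub_le_on_good_interval (hg : ∀ t, HasDerivAt g (a t + lam) t)
    (hgood : ∀ i : ℤ, ∀ t ∈ Icc (p (2 * i)) (p (2 * i + 1)), a t ≤ -c)
    {i : ℤ} {u v : ℝ} (hu : p (2 * i) ≤ u) (huv : u ≤ v) (hv : v ≤ p (2 * i + 1)) :
    g v - g u ≤ (lam - c) * (v - u) :=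
  sub_le_mul_sub_of_hasDerivAt hg huv fun t ht => by
    linarith [hgood i t ⟨hu.trans ht.1.le, ht.2.le.trans hv⟩]

theorem sub_le_on_bad_interval (hg : ∀ t, HasDerivAt g (a t + lam) t)
    (hbad : ∀ i : ℤ, ∀ t ∈ Icc (p (2 * i + 1)) (p (2 * i + 2)), a t ≤ M)
    {i : ℤ} {u v : ℝ} (hu : p (2 * i + 1) ≤ u) (huv : u ≤ v) (hv : v ≤ p (2 * i + 2)) :
    g v - g u ≤ (M + lam) * (v - u) :=
  sub_le_mul_sub_of_hasDerivAt hg huv fun t ht => by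
    linarith [hbad i t ⟨hu.trans ht.1.le, ht.2.le.trans hv⟩]

theorem le_over_period (hg : ∀ t, HasDerivAt g (a t + lam) t) (hp : Monotone p)
    (hgood_len : ∀ i : ℤ, k ≤ p (2 * i + 1) - p (2 * i))
    (hbad_len : ∀ i : ℤ, p (2 * i + 2) - p (2 * i + 1) ≤ L)
    (hgood : ∀ i : ℤ, ∀ t ∈ Icc (p (2 * i)) (p (2 * i + 1)), a t ≤ -c)
    (hbad : ∀ i : ℤ, ∀ t ∈ Icc (p (2 * i + 1)) (p (2 * i + 2)), a t ≤ M)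
    (hlc : lam ≤ c) (hML : 0 ≤ M + lam) (hbal : (M + lam) * L ≤ (c - lam) * k) (i : ℤ) :
    g (p (2 * i + 2)) ≤ g (p (2 * i)) := by
  have hgood_part := sub_le_on_good_interval hg hgood le_rfl (hp (by omega)) (le_refl (p (2 * i + 1)))
  have hbad_part := sub_le_on_bad_interval hg hbad le_rfl (hp (by omega)) (le_refl (p (2 * i + 2)))
  have h1 := mul_le_mul_of_nonpos_left (hgood_len i) (sub_nonpos.2 hlc)
  have h2 := mul_le_mul_of_nonneg_left (hbad_len i) hML
  linarith

theorem le_add_within_period (hg : ∀ t, HasDerivAt g (a t + lam) t) (hp : Monotone p)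
    (hbad_len : ∀ i : ℤ, p (2 * i + 2) - p (2 * i + 1) ≤ L)
    (hgood : ∀ i : ℤ, ∀ t ∈ Icc (p (2 * i)) (p (2 * i + 1)), a t ≤ -c)
    (hbad : ∀ i : ℤ, ∀ t ∈ Icc (p (2 * i + 1)) (p (2 * i + 2)), a t ≤ M)
    (hlc : lam ≤ c) (hML : 0 ≤ M + lam) {i : ℤ} {u v : ℝ}
    (hu : p (2 * i) ≤ u) (huv : u ≤ v) (hv : v ≤ p (2 * i + 2)) :
    g v ≤ g u + (M + lam) * L := by
  have hbad_le : p (2 * i + 2) - p (2 * i + 1) ≤ L := hbad_len i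
  have hmid : p (2 * i + 1) ≤ p (2 * i + 2) := hp (by omega)
  have hlc' : lam - c ≤ 0 := sub_nonpos.2 hlc
  rcases le_total v (p (2 * i + 1)) with hvm | hmv
  · have := sub_le_on_good_interval hg hgood hu huv hvm
    nlinarith
  rcases le_total u (p (2 * i + 1)) with hum | hmu
  · have hgood_part := sub_le_on_good_interval hg hgood hu hum le_rfl
    have hbad_part := sub_le_on_bad_interval hg hbad le_rfl hmv hv
    nlinarith
  · have := sub_le_on_bad_interval hg hbad hmu huv hv
    nlinarith

end Alternating

/-- scalar alternating-interval decay. If `a(t) ≤ -c` on alternating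
intervals `[a_{2i}, a_{2i+1}]` of length ≥ k and `a(t) ≤ M` on intervals
`[a_{2i+1}, a_{2i+2}]` of length ≤ L, with `c k > M L`, then every solution of
`ė = a(t) e` decays exponentially, uniformly. -/
theorem stmt_17 (aa : ℝ → ℝ) (haa : Continuous aa)
    (M L c k : ℝ) (hM : 0 < M) (hL : 0 < L) (hc : 0 < c) (hk : 0 < k)
    (p : ℤ → ℝ) (hmono : StrictMono p)
    (htop : Filter.Tendsto p Filter.atTop Filter.atTop)
    (hbot : Filter.Tendsto p Filter.atBot Filter.atBot)
    (hgood_len : ∀ i : ℤ, k ≤ p (2 * i + 1) - p (2 * i))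
    (hbad_len : ∀ i : ℤ, p (2 * i + 2) - p (2 * i + 1) ≤ L)
    (hgood : ∀ i : ℤ, ∀ t ∈ Set.Icc (p (2 * i)) (p (2 * i + 1)), aa t ≤ -c)
    (hbad : ∀ i : ℤ, ∀ t ∈ Set.Icc (p (2 * i + 1)) (p (2 * i + 2)), aa t ≤ M)
    (hrate : M * L < c * k) :
    ∃ K lam : ℝ, 0 < K ∧ 0 < lam ∧
      ∀ e : ℝ → ℝ, (∀ t, HasDerivAt e (aa t * e t) t) →
        ∀ t0 t : ℝ, t0 ≤ t →
          |e t| ≤ K * Real.exp (-lam * (t - t0)) * |e t0| := by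
  obtain ⟨lam, hlam, hlc, hML, hbal⟩ := exists_rate_of_mul_lt_mul hM hL hc hk hrate
  set G : ℝ → ℝ := fun t => ∫ s in (0 : ℝ)..t, aa s
  have hG : ∀ t, HasDerivAt G (aa t) t := fun t => (haa.integral_hasStrictDerivAt 0 t).hasDerivAt
  have hg : ∀ t, HasDerivAt (fun t => G t + lam * t) (aa t + lam) t := fun t =>
    (hG t).add (by simpa using (hasDerivAt_id t).const_mul lam)
  have htwo_top : Tendsto (fun i : ℤ => 2 * i) atTop atTop := tendsto_id.const_mul_atTop' two_pos
  have htwo_bot : Tendsto (fun i : ℤ => 2 * i) atBot atBot :=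
    tendsto_atBot_atBot.2 fun b => ⟨min b 0, fun i hi => by omega⟩
  refine ⟨exp (2 * ((M + lam) * L)), lam, exp_pos _, hlam, fun e he t0 t ht => ?_⟩
  have hgrowth : G t + lam * t ≤ G t0 + lam * t0 + 2 * ((M + lam) * L) :=
    le_add_two_mul_of_le_on_cells (q := fun i => p (2 * i)) (g := fun t => G t + lam * t)
      (hmono.monotone.comp fun i j hij => by omega) (htop.comp htwo_top) (hbot.comp htwo_bot)
      (fun i => by simpa only [mul_add_one] using
        le_over_period hg hmono.monotone hgood_len hbad_len hgood hbad hlc hML hbal i)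
      (fun i u v hu huv hv => le_add_within_period hg hmono.monotone hbad_len hgood hbad hlc hML
        hu huv (by simpa only [mul_add_one] using hv)) ht
  rw [eq_mul_exp_sub_of_hasDerivAt hG he t0 t, abs_mul, abs_exp, mul_comm]
  calc exp (G t - G t0) * |e t0| ≤ exp (2 * ((M + lam) * L) + -lam * (t - t0)) * |e t0| := by
        gcongr; linarith
    _ = exp (2 * ((M + lam) * L)) * exp (-lam * (t - t0)) * |e t0| := by rw [exp_add]
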